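/- Let m ≥ 1, let ν be an additive Haar measure on the real vector space Herm(m) of m×m complex Hermitian matrices, let A be an invertible m×m complex matrix and C ∈ Herm(m). Then the pushforward of ν under the map X ↦ A X A* + C equals (|det A|^{2m})⁻¹ • ν. (Complex case β = 2 of Proposition 1(i) in measure form.) -/

import Mathlib

/-!
Translation invariance of `ν` disposes of `C`, and a linear map `f` scales every Haar measure
by `|det f|⁻¹`, so everything reduces to `|det_ℝ (X ↦ A X Aᴴ)| = |det A| ^ (2m)` on `Herm(m)`.
Writing each complex matrix as `H + i K` with `H`, `K` Hermitian identifies `M_m(ℂ)`, as a real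
space, with `Herm(m) × Herm(m)`, and `X ↦ A X Aᴴ` acts diagonally on it. Hence the square of the
determinant on `Herm(m)` is the real determinant of `X ↦ A X Aᴴ` on `M_m(ℂ)`, i.e. the norm
squared of its complex determinant `det A ^ m * conj (det A) ^ m`.
-/

open Matrix MeasureTheory ComplexOrder
noncomputable section

/-- The real vector space of `m × m` complex Hermitian matrices. -/
def HermMat (m : ℕ) : Submodule ℝ (Matrix (Fin m) (Fin m) ℂ) where
  carrier := {X | X.IsHermitian}
  add_mem' := fun h1 h2 => h1.add h2
  zero_mem' := Matrix.isHermitian_zero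
  smul_mem' := fun c X hX => by
    show (c • X)ᴴ = c • X
    rw [Matrix.conjTranspose_smul, star_trivial]
    exact congrArg (c • ·) hX

lemma mem_hermMat {m : ℕ} {X : Matrix (Fin m) (Fin m) ℂ} (h : X ∈ HermMat m) :
    X.IsHermitian := h

/-- `HermMat m` carries its Borel σ-algebra. -/
instance (m : ℕ) : MeasurableSpace (HermMat m) := borel _
instance (m : ℕ) : BorelSpace (HermMat m) := ⟨rfl⟩
lemma isHermitian_congr {m : ℕ} (A : Matrix (Fin m) (Fin m) ℂ)
    {X : Matrix (Fin m) (Fin m) ℂ} (hX : X.IsHermitian) : (A * X * Aᴴ).IsHermitian := by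
  show (A * X * Aᴴ)ᴴ = A * X * Aᴴ
  rw [Matrix.conjTranspose_mul, Matrix.conjTranspose_mul,
    Matrix.conjTranspose_conjTranspose, hX.eq, Matrix.mul_assoc]

/-- The map `X ↦ A X A*` on Hermitian matrices. -/
def hermCongrFun {m : ℕ} (A : Matrix (Fin m) (Fin m) ℂ) (X : HermMat m) : HermMat m :=
  ⟨A * X.1 * Aᴴ, isHermitian_congr A (mem_hermMat X.2)⟩

open Module Complex

/-- Mathlib's `map_linearMap_addHaar_eq_smul_addHaar` needs a normed space, whereas `HermMat m`
only carries the subspace topology of `Matrix`. -/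
theorem MeasureTheory.Measure.map_linearMap_addHaar_eq_smul_addHaar' {E : Type*}
    [AddCommGroup E] [Module ℝ E] [TopologicalSpace E] [IsTopologicalAddGroup E]
    [ContinuousSMul ℝ E] [T2Space E] [FiniteDimensional ℝ E] [MeasurableSpace E] [BorelSpace E]
    (μ : Measure E) [μ.IsAddHaarMeasure] {f : E →ₗ[ℝ] E} (hf : LinearMap.det f ≠ 0) :
    μ.map f = ENNReal.ofReal |(LinearMap.det f)⁻¹| • μ := by
  let e : E ≃L[ℝ] (Fin (finrank ℝ E) → ℝ) :=
    (LinearEquiv.ofFinrankEq E _ (finrank_fin_fun ℝ).symm).toContinuousLinearEquiv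
  let g : (Fin (finrank ℝ E) → ℝ) →ₗ[ℝ] Fin (finrank ℝ E) → ℝ :=
    e.toLinearMap ∘ₗ f ∘ₗ e.symm.toLinearMap
  have hg : LinearMap.det g = LinearMap.det f := LinearMap.det_conj f e.toLinearEquiv
  have hfg : ⇑f = e.symm ∘ g ∘ e := by ext x; simp [g]
  have he : Measurable e := e.continuous.measurable
  have he' : Measurable e.symm := e.symm.continuous.measurable
  have hgm : Measurable g := (LinearMap.continuous_of_finiteDimensional g).measurable
  rw [hfg, ← Measure.map_map he' (hgm.comp he), ← Measure.map_map hgm he,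
    map_linearMap_addHaar_pi_eq_smul_addHaar (hg ▸ hf), Measure.map_smul, hg,
    Measure.map_map he' he]
  simp

section MatrixMul

variable {n R : Type*} [Fintype n] [DecidableEq n] [CommRing R]

theorem Matrix.det_linearMap_mulRight (B : Matrix n n R) :
    LinearMap.det (LinearMap.mulRight R B : Matrix n n R →ₗ[R] Matrix n n R) =
      B.det ^ Fintype.card n := by
  let e : (n → n → R) ≃ₗ[R] Matrix n n R := ofLinearEquiv R
  have h : LinearMap.mulRight R B = e.toLinearMap ∘ₗ
      (LinearMap.pi fun i => B.vecMulLinear ∘ₗ LinearMap.proj i) ∘ₗ e.symm.toLinearMap := by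
    ext X i j
    rfl
  rw [h, LinearMap.det_conj, LinearMap.det_pi, ← transpose_transpose B, vecMulLinear_transpose,
    ← toLin'_apply', LinearMap.det_toLin', Finset.prod_const, Finset.card_univ, det_transpose,
    transpose_transpose]

theorem Matrix.det_linearMap_mulLeft (A : Matrix n n R) :
    LinearMap.det (LinearMap.mulLeft R A : Matrix n n R →ₗ[R] Matrix n n R) =
      A.det ^ Fintype.card n := by
  let e : Matrix n n R ≃ₗ[R] Matrix n n R := transposeLinearEquiv n n R R
  have h : LinearMap.mulLeft R A =
      e.toLinearMap ∘ₗ LinearMap.mulRight R Aᵀ ∘ₗ e.symm.toLinearMap := by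
    ext X i j
    simp [e, mul_apply, mul_comm]
  rw [h, LinearMap.det_conj, det_linearMap_mulRight, det_transpose]

end MatrixMul

section SelfAdjointDecomposition

variable {A : Type*} [AddCommGroup A] [Module ℂ A] [Module ℝ A] [IsScalarTower ℝ ℂ A]
  [StarAddMonoid A] [StarModule ℂ A] {H : Submodule ℝ A}

def Submodule.prodEquivOfSelfAdjoint (hH : ∀ x, x ∈ H ↔ IsSelfAdjoint x) :
    (H × H) ≃ₗ[ℝ] A where
  toFun p := (p.1 : A) + I • (p.2 : A)
  map_add' p q := by simp only [Prod.fst_add, Prod.snd_add, Submodule.coe_add, smul_add]; abel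
  map_smul' r p := by
    simp only [Prod.smul_fst, Prod.smul_snd, Submodule.coe_smul, RingHom.id_apply, smul_add,
      smul_comm r I]
  invFun x :=
    (⟨(2⁻¹ : ℂ) • (x + star x), (hH _).2 (by simp [IsSelfAdjoint, star_smul, add_comm])⟩,
      ⟨(-I / 2) • (x - star x), (hH _).2 (by
        simp only [IsSelfAdjoint, div_eq_mul_inv, neg_mul, smul_sub, neg_smul, sub_neg_eq_add,
          star_add, star_neg, star_smul, star_mul', RCLike.star_def, conj_I, star_inv₀,
          star_ofNat, neg_neg, star_star]
        abel)⟩)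
  left_inv p := by
    obtain ⟨⟨h, hh⟩, ⟨k, hk⟩⟩ := p
    have hh' : star h = h := (hH h).1 hh
    have hk' : star k = k := (hH k).1 hk
    have hI : -I / 2 * I = 2⁻¹ := by linear_combination (-1 / 2 : ℂ) * I_sq
    ext
    · simp only [star_add, hh', star_smul, RCLike.star_def, conj_I, hk', neg_smul, smul_add,
        smul_neg]
      module
    · simp only [star_add, hh', star_smul, RCLike.star_def, conj_I, hk', neg_smul,
        add_sub_add_left_eq_sub, sub_neg_eq_add, smul_add, smul_smul, hI]
      module
  right_inv x := by
    have hI : I * (-I / 2) = 2⁻¹ := by linear_combination (-1 / 2 : ℂ) * I_sq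
    simp only [smul_smul, hI]
    module

theorem LinearMap.det_sq_eq_normSq_det_of_selfAdjoint [Module.Finite ℂ A]
    (hH : ∀ x, x ∈ H ↔ IsSelfAdjoint x) (f : A →ₗ[ℂ] A) (g : H →ₗ[ℝ] H)
    (hg : ∀ x, (g x : A) = f x) : LinearMap.det g ^ 2 = normSq (LinearMap.det f) := by
  have : Module.Finite ℝ A := Module.Finite.trans ℂ A
  let e := Submodule.prodEquivOfSelfAdjoint hH
  have hconj : LinearMap.prodMap g g =
      e.symm.toLinearMap ∘ₗ f.restrictScalars ℝ ∘ₗ e.symm.symm.toLinearMap := by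
    refine LinearMap.ext fun p => e.injective ?_
    simp only [LinearMap.comp_apply, LinearEquiv.coe_coe, LinearEquiv.symm_symm,
      LinearEquiv.apply_symm_apply, LinearMap.restrictScalars_apply]
    show ((g p.1 : H) : A) + I • ((g p.2 : H) : A) = f ((p.1 : A) + I • (p.2 : A))
    rw [map_add, map_smul, hg, hg]
  rw [sq, ← LinearMap.det_prodMap, hconj, LinearMap.det_conj, LinearMap.det_restrictScalars,
    Algebra.norm_complex_apply]

end SelfAdjointDecomposition

section HermCongr

variable {m : ℕ}

def hermCongr (A : Matrix (Fin m) (Fin m) ℂ) : HermMat m →ₗ[ℝ] HermMat m where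
  toFun := hermCongrFun A
  map_add' X Y := Subtype.ext (by simp [hermCongrFun, Matrix.mul_add, Matrix.add_mul])
  map_smul' c X := Subtype.ext (by simp [hermCongrFun])

theorem abs_det_hermCongr (A : Matrix (Fin m) (Fin m) ℂ) :
    |LinearMap.det (hermCongr A)| = ‖A.det‖ ^ (2 * m) := by
  have hsq := LinearMap.det_sq_eq_normSq_det_of_selfAdjoint
    (fun _ => isHermitian_iff_isSelfAdjoint)
    (LinearMap.mulRight ℂ Aᴴ ∘ₗ LinearMap.mulLeft ℂ A) (hermCongr A) fun _ => rfl
  rw [LinearMap.det_comp, det_linearMap_mulRight, det_linearMap_mulLeft, det_conjTranspose]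
    at hsq
  rw [← abs_of_nonneg (by positivity : (0 : ℝ) ≤ ‖A.det‖ ^ (2 * m)),
    ← sq_eq_sq_iff_abs_eq_abs, hsq]
  simp only [RCLike.star_def, Fintype.card_fin, normSq_eq_norm_sq, Complex.norm_mul, norm_pow,
    RCLike.norm_conj]
  ring

end HermCongr

theorem map_affine_hermCongr_general (m : ℕ) (ν : Measure (HermMat m))
    [ν.IsAddHaarMeasure] (A : Matrix (Fin m) (Fin m) ℂ) (hA : IsUnit A.det) (C : HermMat m) :
    ν.map (fun X => hermCongrFun A X + C)
      = (ENNReal.ofReal (‖A.det‖ ^ (2 * m)))⁻¹ • ν := by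
  have hpos : 0 < ‖A.det‖ ^ (2 * m) := pow_pos (norm_pos_iff.2 hA.ne_zero) _
  have hdet : LinearMap.det (hermCongr A) ≠ 0 := by
    rw [← abs_ne_zero, abs_det_hermCongr]
    exact hpos.ne'
  have hcont : Continuous (hermCongr A) := LinearMap.continuous_of_finiteDimensional _
  calc ν.map (fun X => hermCongrFun A X + C)
      = (ν.map (hermCongr A)).map (· + C) :=
        (Measure.map_map (measurable_add_const C) hcont.measurable).symm
    _ = (ENNReal.ofReal (‖A.det‖ ^ (2 * m)))⁻¹ • ν := by
        rw [Measure.map_linearMap_addHaar_eq_smul_addHaar' ν hdet, Measure.map_smul,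
          map_add_right_eq_self, abs_inv, abs_det_hermCongr, ENNReal.ofReal_inv_of_pos hpos]

/-- complex case β = 2 of Proposition 1(i), measure form: for an additive
Haar measure `ν` on the Hermitian matrices, invertible complex `A` and Hermitian `C`, the
pushforward of `ν` under `X ↦ A X A* + C` is `(|det A| ^ (2m))⁻¹ • ν`. -/
theorem map_affine_hermCongr (m : ℕ) (hm : 1 ≤ m) (ν : Measure (HermMat m))
    [ν.IsAddHaarMeasure] (A : Matrix (Fin m) (Fin m) ℂ) (hA : IsUnit A.det) (C : HermMat m) :
    ν.map (fun X => hermCongrFun A X + C)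
      = (ENNReal.ofReal (‖A.det‖ ^ (2 * m)))⁻¹ • ν :=
  map_affine_hermCongr_general m ν A hA C
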